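/- arXiv:math/0503475 — 3 statements merged into one kernel-verified Lean document; each statement's English description precedes it below -/
import Mathlib

section
/- Let Z : I → ℝ^d be a C¹ function on a compact set I ⊆ ℝ^d and u ∈ ℝ^d. Suppose (a) for every t with Z(t) = u, the smallest singular value of Z'(t) is at least Δ > 0, and (b) the modulus of continuity of Z' on I satisfies ω_{Z'}(η) < Δ/d for some η > 0. Then any two distinct roots t₁, t₂ of Z(t) = u such that the segment [t₁, t₂] is contained in I satisfy ‖t₁ - t₂‖ > η. -/
open scoped RealInnerProductSpace

/-!
If `‖t₁ - t₂‖ ≤ η`, Rolle's theorem applied to the `i`-th coordinate of `Z` along the segment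
gives `cᵢ` with `(Z'(cᵢ) v)ᵢ = 0`, where `v = t₂ - t₁`. By (b), row `i` of `Z'(t₁)` is entrywise
within `Δ / d` of that of `Z'(cᵢ)`, so `|(Z'(t₁) v)ᵢ| < (Δ / d) ‖v‖₁ ≤ (Δ / √d) ‖v‖`. Summing the
squares over `i` gives `‖Z'(t₁) v‖ < Δ ‖v‖`, contradicting (a) at the root `t₁`.
-/

theorem exists_mem_segment_apply_fderiv_eq_zero {E F : Type*} [NormedAddCommGroup E]
    [NormedSpace ℝ E] [NormedAddCommGroup F] [NormedSpace ℝ F] {f : E → F}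
    (hf : Differentiable ℝ f) {a b : E} (hab : f a = f b) (φ : StrongDual ℝ F) :
    ∃ c ∈ segment ℝ a b, φ (fderiv ℝ f c (b - a)) = 0 := by
  obtain ⟨c, hc, hφ⟩ := domain_mvt (f := φ ∘ f) (f' := fun x ↦ φ.comp (fderiv ℝ f x))
    (fun x _ ↦ (φ.hasFDerivAt.comp x (hf x).hasFDerivAt).hasFDerivWithinAt)
    convex_univ (Set.mem_univ a) (Set.mem_univ b)
  exact ⟨c, hc, by simpa [hab] using hφ.symm⟩

namespace EuclideanSpace

variable {ι κ : Type*} [Fintype ι]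

theorem sq_sum_abs_le_card_mul_norm_sq (v : EuclideanSpace ℝ ι) :
    (∑ k, |v k|) ^ 2 ≤ Fintype.card ι * ‖v‖ ^ 2 := by
  simpa [real_norm_sq_eq] using sq_sum_le_card_mul_sum_sq (s := Finset.univ) (f := fun k ↦ |v k|)

theorem norm_sq_lt_card_mul_sq [Nonempty ι] {w : EuclideanSpace ℝ ι} {C : ℝ}
    (hw : ∀ i, |w i| < C) : ‖w‖ ^ 2 < Fintype.card ι * C ^ 2 := by
  rw [real_norm_sq_eq]
  calc ∑ i, w i ^ 2 < ∑ _i : ι, C ^ 2 :=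
        Finset.sum_lt_sum_of_nonempty Finset.univ_nonempty fun i _ ↦
          sq_lt_sq' (neg_lt_of_abs_lt (hw i)) (lt_of_abs_lt (hw i))
    _ = Fintype.card ι * C ^ 2 := by simp

variable [DecidableEq ι]

theorem apply_eq_sum_mul_apply_single [Fintype κ]
    (T : EuclideanSpace ℝ ι →L[ℝ] EuclideanSpace ℝ κ) (v : EuclideanSpace ℝ ι) (i : κ) :
    T v i = ∑ k, v k * T (single k 1) i := by
  conv_lhs => rw [← (basisFun ι ℝ).sum_repr v]
  simp [map_sum, map_smul]

theorem abs_apply_lt_mul_sum_abs [Fintype κ]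
    (T : EuclideanSpace ℝ ι →L[ℝ] EuclideanSpace ℝ κ) {v : EuclideanSpace ℝ ι} (hv : v ≠ 0)
    (i : κ) {δ : ℝ} (hT : ∀ k, |T (single k 1) i| < δ) : |T v i| < δ * ∑ k, |v k| := by
  obtain ⟨k₀, hk₀⟩ : ∃ k, v k ≠ 0 := by
    by_contra! h
    exact hv (by ext k; exact h k)
  rw [apply_eq_sum_mul_apply_single, Finset.mul_sum]
  refine (Finset.abs_sum_le_sum_abs _ _).trans_lt <|
    Finset.sum_lt_sum (fun k _ ↦ ?_) ⟨k₀, Finset.mem_univ _, ?_⟩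
  · rw [abs_mul, mul_comm]
    exact mul_le_mul_of_nonneg_right (hT k).le (abs_nonneg _)
  · rw [abs_mul, mul_comm]
    exact mul_lt_mul_of_pos_right (hT k₀) (abs_pos.2 hk₀)

theorem norm_apply_lt_of_rows_near_kernel (L : EuclideanSpace ℝ ι →L[ℝ] EuclideanSpace ℝ ι)
    (M : ι → EuclideanSpace ℝ ι →L[ℝ] EuclideanSpace ℝ ι) {v : EuclideanSpace ℝ ι}
    (hv : v ≠ 0) (hMv : ∀ i, M i v i = 0) {δ : ℝ}
    (hLM : ∀ i k, |L (single k 1) i - M i (single k 1) i| < δ / Fintype.card ι) :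
    ‖L v‖ < δ * ‖v‖ := by
  have : Nonempty ι := by
    by_contra! h
    exact hv (Subsingleton.elim _ _)
  have hn : (0 : ℝ) < Fintype.card ι := by exact_mod_cast Fintype.card_pos
  have hrow : ∀ i, |L v i| < δ / Fintype.card ι * ∑ k, |v k| := fun i ↦ by
    simpa [hMv i] using abs_apply_lt_mul_sum_abs (L - M i) hv i (by simpa using hLM i)
  have hδ : 0 < δ := (div_pos_iff_of_pos_right hn).1 <|
    (abs_nonneg _).trans_lt (hLM (Classical.arbitrary ι) (Classical.arbitrary ι))
  refine lt_of_pow_lt_pow_left₀ 2 (by positivity) ?_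
  calc ‖L v‖ ^ 2 < Fintype.card ι * (δ / Fintype.card ι * ∑ k, |v k|) ^ 2 :=
        norm_sq_lt_card_mul_sq hrow
    _ = δ ^ 2 / Fintype.card ι * (∑ k, |v k|) ^ 2 := by field_simp
    _ ≤ δ ^ 2 / Fintype.card ι * (Fintype.card ι * ‖v‖ ^ 2) := by
        gcongr; exact sq_sum_abs_le_card_mul_norm_sq v
    _ = (δ * ‖v‖) ^ 2 := by field_simp

end EuclideanSpace

theorem stmt_0_general {d : ℕ} (Z : EuclideanSpace ℝ (Fin d) → EuclideanSpace ℝ (Fin d))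
    (I : Set (EuclideanSpace ℝ (Fin d)))
    (hZ : ContDiff ℝ 1 Z) (u : EuclideanSpace ℝ (Fin d))
    (Δ η : ℝ)
    -- (a) smallest singular value of Z'(t) at roots is at least Δ
    (ha : ∀ t ∈ I, Z t = u → ∀ v : EuclideanSpace ℝ (Fin d),
      Δ * ‖v‖ ≤ ‖fderiv ℝ Z t v‖)
    -- (b) the modulus of continuity of the entries of Z' at scale η is < Δ/d
    (hb : ∀ s ∈ I, ∀ t ∈ I, ‖s - t‖ ≤ η → ∀ i k : Fin d,
      |fderiv ℝ Z s (EuclideanSpace.single k 1) i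
        - fderiv ℝ Z t (EuclideanSpace.single k 1) i| < Δ / d)
    (t₁ t₂ : EuclideanSpace ℝ (Fin d)) (ht₁ : t₁ ∈ I)
    (hne : t₁ ≠ t₂) (hZ₁ : Z t₁ = u) (hZ₂ : Z t₂ = u)
    (hseg : segment ℝ t₁ t₂ ⊆ I) :
    η < ‖t₁ - t₂‖ := by
  by_contra! hclose
  have hroot (i : Fin d) : ∃ c ∈ segment ℝ t₁ t₂, fderiv ℝ Z c (t₂ - t₁) i = 0 :=
    exists_mem_segment_apply_fderiv_eq_zero (hZ.differentiable one_ne_zero)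
      (hZ₁.trans hZ₂.symm) (EuclideanSpace.proj i)
  choose c hc hcZ using hroot
  have hnear (i k : Fin d) : |fderiv ℝ Z t₁ (EuclideanSpace.single k 1) i
      - fderiv ℝ Z (c i) (EuclideanSpace.single k 1) i| < Δ / Fintype.card (Fin d) := by
    rw [Fintype.card_fin]
    refine hb t₁ ht₁ (c i) (hseg (hc i)) ?_ i k
    rw [norm_sub_rev]
    exact (norm_sub_le_of_mem_segment (hc i)).trans (norm_sub_rev t₁ t₂ ▸ hclose)
  exact (ha t₁ ht₁ hZ₁ _).not_gt <| EuclideanSpace.norm_apply_lt_of_rows_near_kernel _ _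
    (sub_ne_zero.2 hne.symm) hcZ hnear

/-- Lemma 2.2: separation of roots. -/
theorem stmt_0 {d : ℕ} (Z : EuclideanSpace ℝ (Fin d) → EuclideanSpace ℝ (Fin d))
    (I : Set (EuclideanSpace ℝ (Fin d))) (hI : IsCompact I)
    (hZ : ContDiff ℝ 1 Z) (u : EuclideanSpace ℝ (Fin d))
    (Δ η : ℝ) (hΔ : 0 < Δ) (hη : 0 < η)
    -- (a) smallest singular value of Z'(t) at roots is at least Δ
    (ha : ∀ t ∈ I, Z t = u → ∀ v : EuclideanSpace ℝ (Fin d),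
      Δ * ‖v‖ ≤ ‖fderiv ℝ Z t v‖)
    -- (b) the modulus of continuity of the entries of Z' at scale η is < Δ/d
    (hb : ∀ s ∈ I, ∀ t ∈ I, ‖s - t‖ ≤ η → ∀ i k : Fin d,
      |fderiv ℝ Z s (EuclideanSpace.single k 1) i
        - fderiv ℝ Z t (EuclideanSpace.single k 1) i| < Δ / d)
    (t₁ t₂ : EuclideanSpace ℝ (Fin d)) (ht₁ : t₁ ∈ I) (ht₂ : t₂ ∈ I)
    (hne : t₁ ≠ t₂) (hZ₁ : Z t₁ = u) (hZ₂ : Z t₂ = u)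
    (hseg : segment ℝ t₁ t₂ ⊆ I) :
    η < ‖t₁ - t₂‖ :=
  stmt_0_general Z I hZ u Δ η ha hb t₁ t₂ ht₁ hne hZ₁ hZ₂ hseg
end

section
/- Let A be a positive semidefinite symmetric d×d real matrix and let {v₁, v₂, …, v_d} be an orthonormal basis of ℝ^d. Let B be the (d-1)×(d-1) matrix with entries B_{jk} = ⟨A v_j, v_k⟩ for j,k = 2,…,d. Then det(A) ≤ ⟨A v₁, v₁⟩ · det(B). -/
/-!
Conjugating by the orthogonal matrix with rows `vᵢ` turns `A` into the positive semidefinite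
matrix `Cᵢⱼ = ⟨A vᵢ, vⱼ⟩`, which has the same determinant, corner entry `⟨A v₀, v₀⟩` and
complementary principal block `B`. If `B` is invertible, the Schur complement gives
`det C = det B · (C₀₀ - bᴴ B⁻¹ b)` with `bᴴ B⁻¹ b ≥ 0`; if `B` is singular, positive
semidefiniteness extends a kernel vector of `B` by zero to a kernel vector of `C`, so `det C = 0`.
-/
open scoped Matrix ComplexOrder
open Matrix

namespace Matrix

variable {𝕜 m : Type*} [RCLike 𝕜] [Fintype m] [DecidableEq m]

lemma PosSemidef.det_eq_zero_of_det_toBlocks₁₁_eq_zero {l : Type*} [Fintype l] [DecidableEq l]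
    {M : Matrix (m ⊕ l) (m ⊕ l) 𝕜} (hM : M.PosSemidef) (h : M.toBlocks₁₁.det = 0) :
    M.det = 0 := by
  obtain ⟨x, hx0, hx⟩ := exists_mulVec_eq_zero_iff.mpr h
  have hquad : star (Sum.elim x 0) ⬝ᵥ M *ᵥ Sum.elim x 0 = 0 := by
    rw [← fromBlocks_toBlocks M, fromBlocks_mulVec]
    simp [hx, dotProduct, Fintype.sum_sum_type]
  refine exists_mulVec_eq_zero_iff.mp
    ⟨Sum.elim x 0, ?_, (hM.dotProduct_mulVec_zero_iff _).mp hquad⟩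
  simpa [funext_iff] using hx0

lemma PosSemidef.det_le_det_toBlocks₁₁_mul {M : Matrix (m ⊕ Unit) (m ⊕ Unit) 𝕜}
    (hM : M.PosSemidef) : M.det ≤ M.toBlocks₁₁.det * M (Sum.inr ()) (Sum.inr ()) := by
  set D := M.toBlocks₁₁
  set b := M.toBlocks₁₂
  by_cases hD : D.det = 0
  · rw [hM.det_eq_zero_of_det_toBlocks₁₁_eq_zero hD, hD, zero_mul]
  have hDpd : D.PosDef := (hM.submatrix Sum.inl).posDef_iff_det_ne_zero.mpr hD
  let _ : Invertible D := D.invertibleOfIsUnitDet (isUnit_iff_ne_zero.mpr hD)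
  have hb : bᴴ = M.toBlocks₂₁ :=
    (isHermitian_fromBlocks_iff.mp ((fromBlocks_toBlocks M).symm ▸ hM.isHermitian)).2.1
  have hdet : M.det = D.det * (M (Sum.inr ()) (Sum.inr ()) - (bᴴ * D⁻¹ * b) () ()) := by
    conv_lhs => rw [← fromBlocks_toBlocks M, det_fromBlocks₁₁, ← hb, invOf_eq_nonsing_inv]
    rw [det_unique (M.toBlocks₂₂ - bᴴ * D⁻¹ * b)]
    rfl
  have hq : 0 ≤ (bᴴ * D⁻¹ * b) () () :=
    (hDpd.inv.posSemidef.conjTranspose_mul_mul_same b).diag_nonneg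
  rw [hdet]
  exact mul_le_mul_of_nonneg_left (sub_le_self _ hq) (hM.submatrix Sum.inl).det_nonneg

lemma PosSemidef.det_le_mul_det_submatrix_succ {n : ℕ}
    {M : Matrix (Fin (n + 1)) (Fin (n + 1)) 𝕜} (hM : M.PosSemidef) :
    M.det ≤ M 0 0 * (M.submatrix Fin.succ Fin.succ).det := by
  let e : Fin n ⊕ Unit ≃ Fin (n + 1) :=
    ((finSuccEquiv n).trans (Equiv.optionEquivSumPUnit.{0} (Fin n))).symm
  have key := ((posSemidef_submatrix_equiv e).mpr hM).det_le_det_toBlocks₁₁_mul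
  have h₁₁ : (M.submatrix e e).toBlocks₁₁ = M.submatrix Fin.succ Fin.succ := by
    ext i j; simp [e, toBlocks₁₁]
  rw [det_submatrix_equiv_self, h₁₁, mul_comm] at key
  simpa [e] using key

end Matrix

/-- Inequality (18): for a positive semidefinite symmetric matrix `A` and an
orthonormal basis `v₀, …, v_n` of `ℝ^{n+1}`, `det A ≤ ⟨A v₀, v₀⟩ · det B`
where `B` is the compression of `A` to the span of `v₁, …, v_n`. -/
theorem stmt_1 {n : ℕ} (A : Matrix (Fin (n + 1)) (Fin (n + 1)) ℝ)
    (hA : A.PosSemidef)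
    (v : Fin (n + 1) → (Fin (n + 1) → ℝ))
    (hv : ∀ i j, v i ⬝ᵥ v j = if i = j then (1 : ℝ) else 0)
    (B : Matrix (Fin n) (Fin n) ℝ)
    (hB : ∀ j k : Fin n, B j k = A.mulVec (v j.succ) ⬝ᵥ v k.succ) :
    A.det ≤ (A.mulVec (v 0) ⬝ᵥ v 0) * B.det := by
  let V : Matrix (Fin (n + 1)) (Fin (n + 1)) ℝ := Matrix.of v
  have hV : V * Vᵀ = 1 := by
    ext i j
    rw [mul_apply', one_apply]
    exact hv i j
  -- `Aᵀ` rather than `A`, so that `C i j = ⟨A vᵢ, vⱼ⟩` holds without appealing to symmetry.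
  let C := V * Aᵀ * Vᵀ
  have hC : C.PosSemidef := by
    simpa [C, conjTranspose_eq_transpose_of_trivial] using
      hA.transpose.mul_mul_conjTranspose_same V
  have hCdet : C.det = A.det := by
    rw [det_conj_of_mul_eq_one hV (mul_eq_one_comm.mp hV), det_transpose]
  have hCapply : ∀ i j, C i j = A *ᵥ v i ⬝ᵥ v j := fun i j => by
    change v i ᵥ* Aᵀ ⬝ᵥ v j = _
    rw [vecMul_transpose]
  have hCB : C.submatrix Fin.succ Fin.succ = B := by
    ext j k; rw [submatrix_apply, hCapply, hB]
  simpa [hCdet, hCapply, hCB] using hC.det_le_mul_det_submatrix_succ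
end

section
/- Let X : I → ℝ be a C² Gaussian process on a compact d-dimensional C^∞ manifold I. For t ∈ interior(I), under the conditioning {X(t) = u, X'(t) = 0}, the event {X(s) ≤ u for all s ∈ I} coincides with the event {X^t(s) ≤ β^t(s) u for all s ∈ I \ {t}}, where X(s) = a_s^t X(t) + ⟨b_s^t, X'(t)⟩ + n(t,s) X^t(s) is the Gaussian regression of X(s) on (X(t), X'(t)), and β^t(s) = (1 - a_s^t)/n(t,s) (for constant function 1 decomposed with the same regression coefficients). -/
/-- Under the conditioning `{X(t) = u, X'(t) = 0}`, the event
`{X(s) ≤ u, ∀ s ∈ I}` coincides with `{X^t(s) ≤ β^t(s)u, ∀ s ∈ I \ {t}}`: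
pathwise, if `X(s) = a_s^t X(t) + ⟨b_s^t, X'(t)⟩ + n(t,s) X^t(s)` with
`X(t) = u`, `X'(t) = 0`, `n(t,s) > 0` for `s ≠ t` and
`β^t(s) = (1 - a_s^t)/n(t,s)` (the regression of the constant function 1),
the two conditions are equivalent. -/
theorem stmt_11 {d : ℕ} {E : Type*} [NormedAddCommGroup E] [InnerProductSpace ℝ E]
    (I : Set E) (t : E) (ht : t ∈ I) (u : ℝ)
    (X : E → ℝ) (Xt : E → ℝ) (a n β : E → ℝ)
    (hn : ∀ s ∈ I, s ≠ t → 0 < n s)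
    (hβ : ∀ s ∈ I, s ≠ t → β s = (1 - a s) / n s)
    (hXt : X t = u)
    -- the regression decomposition, conditionally on X(t) = u, X'(t) = 0
    (hreg : ∀ s ∈ I, s ≠ t → X s = a s * u + n s * Xt s) :
    (∀ s ∈ I, X s ≤ u) ↔ (∀ s ∈ I, s ≠ t → Xt s ≤ β s * u) := by
  constructor
  · intro h s hs hst
    have hns := hn s hs hst
    have hXs := hreg s hs hst
    have hle := h s hs
    rw [hβ s hs hst, div_mul_eq_mul_div, le_div_iff₀ hns]
    nlinarith
  · intro h s hs
    by_cases hst : s = t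
    · simpa [hst, hXt]
    · have hns := hn s hs hst
      have hb := hβ s hs hst
      have hle := h s hs hst
      rw [hb, div_mul_eq_mul_div, le_div_iff₀ hns] at hle
      rw [hreg s hs hst]
      nlinarith
end
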